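/- There exist absolute constants C > 0 and δ > 0 with the following property. Let n ≥ 3, r ≥ 3, let k = (k_1,…,k_n) be a sequence of non-negative integers, and let e_i be an r-element subset of V. Let F_i ⊆ H_r(k) be the set of hypergraphs containing e_i and F_i^c ⊆ H_r(k) the set of hypergraphs not containing e_i. If r^4·k_max^3 ≤ δ·M(k), then |F_i| ≤ C·|F_i^c|·(k_max^3/M(k)^2 + r·k_max^4/M(k)^3). -/

import Mathlib

/-- `H` is a simple `r`-uniform hypergraph on `Fin n`: a set of `r`-element subsets. -/
def isUniform (n r : ℕ) (H : Finset (Finset (Fin n))) : Prop :=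
  ∀ e ∈ H, e.card = r

/-- The degree of vertex `v` in the hypergraph `H`. -/
def hDeg (n : ℕ) (H : Finset (Finset (Fin n))) (v : Fin n) : ℕ :=
  (H.filter fun e => v ∈ e).card

/-- `H_r(k)`: simple `r`-uniform hypergraphs on `Fin n` with degree sequence `k`. -/
def HrSet (n r : ℕ) (k : Fin n → ℕ) : Set (Finset (Finset (Fin n))) :=
  {H | isUniform n r H ∧ ∀ v, hDeg n H v = k v}

/-- `M(k)`, the sum of the degrees. -/
def Mk (n : ℕ) (k : Fin n → ℕ) : ℕ := ∑ v, k v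

/-- `k_max`, the maximum degree. -/
def kmax (n : ℕ) (k : Fin n → ℕ) : ℕ := Finset.univ.sup k

/-!
Switching argument. Fix distinct vertices `u₁ u₂ ∈ eᵢ` and a third vertex `x ∈ eᵢ`. For a
hypergraph `H ∋ eᵢ` and two flags `(v₁, f₁)`, `(v₂, f₂)` (a vertex in an edge of `H`), the
switching replaces the edges `eᵢ, f₁, f₂` by `eᵢ - u₁ - u₂ + v₁ + v₂`, `f₁ - v₁ + u₁`,
`f₂ - v₂ + u₂`. This keeps all degrees and removes `eᵢ`. Of the `M²` pairs of flags at most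
`M (7 r K + 2 K²) + 4 K³` fail to give a valid switching (`K = k_max`). Conversely, a
hypergraph `H' ∌ eᵢ` together with `(v₁, v₂, g₁, g₂)` determines the switching producing it, where
the new edge `eᵢ - u₁ - u₂ + v₁ + v₂` of `H'` passes through `x`, determines `{v₁, v₂}` as its
part outside `eᵢ`, and `u₁ ∈ g₁`, `u₂ ∈ g₂`; so `H'` arises from at most `4 K³` switchings.
Double counting gives `|Fᵢ| M² / 2 ≤ 4 K³ |Fᵢᶜ|` once `M ≥ 40 r⁴ K³`.
-/

open Finset

section ProductCount

variable {α β : Type*} {s : Finset α} {t : Finset β} {m : ℕ}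

lemma card_filter_product_le_left {P : α → β → Prop} [∀ a b, Decidable (P a b)]
    (h : ∀ a ∈ s, #(t.filter (P a)) ≤ m) :
    #((s ×ˢ t).filter fun x => P x.1 x.2) ≤ #s * m := by
  rw [card_filter, sum_product]
  simp_rw [← card_filter]
  exact sum_le_card_nsmul s _ m h

lemma card_filter_product_le_right {P : α → β → Prop} [∀ a b, Decidable (P a b)]
    (h : ∀ b ∈ t, #(s.filter (P · b)) ≤ m) :
    #((s ×ˢ t).filter fun x => P x.1 x.2) ≤ #t * m := by
  rw [card_filter, sum_product_right]
  simp_rw [← card_filter]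
  exact sum_le_card_nsmul t _ m h

lemma card_filter_or_le [DecidableEq α] (s : Finset α) (p q : α → Prop) [DecidablePred p]
    [DecidablePred q] : #(s.filter fun x => p x ∨ q x) ≤ #(s.filter p) + #(s.filter q) := by
  rw [filter_or]
  exact card_union_le _ _

end ProductCount

section Degree

variable {n : ℕ} {H : Finset (Finset (Fin n))}

lemma hDeg_insert {f : Finset (Fin n)} (hf : f ∉ H) (w : Fin n) :
    hDeg n (insert f H) w = hDeg n H w + if w ∈ f then 1 else 0 := by
  unfold hDeg
  split_ifs with hw
  · rw [filter_insert, if_pos hw, card_insert_of_notMem fun h => hf (mem_filter.1 h).1]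
  · rw [filter_insert, if_neg hw, add_zero]

lemma hDeg_triple {a b c : Finset (Fin n)} (hab : a ≠ b) (hac : a ≠ c) (hbc : b ≠ c)
    (w : Fin n) : hDeg n {a, b, c} w =
      (if w ∈ a then 1 else 0) + (if w ∈ b then 1 else 0) + (if w ∈ c then 1 else 0) := by
  rw [hDeg_insert (by simp [hab, hac]), hDeg_insert (by simp [hbc]),
    ← LawfulSingleton.insert_empty_eq c, hDeg_insert (notMem_empty c)]
  have : hDeg n ∅ w = 0 := rfl
  omega

lemma hDeg_union {A B : Finset (Finset (Fin n))} (h : Disjoint A B) (w : Fin n) :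
    hDeg n (A ∪ B) w = hDeg n A w + hDeg n B w := by
  rw [hDeg, filter_union, card_union_of_disjoint (disjoint_filter_filter h), hDeg, hDeg]

lemma hDeg_sdiff_union {old new : Finset (Finset (Fin n))} (hold : old ⊆ H)
    (hnew : Disjoint (H \ old) new) (hdeg : ∀ w, hDeg n old w = hDeg n new w) (w : Fin n) :
    hDeg n (H \ old ∪ new) w = hDeg n H w :=
  calc hDeg n (H \ old ∪ new) w = hDeg n (H \ old) w + hDeg n old w := by
        rw [hDeg_union hnew, hdeg]
    _ = hDeg n H w := by rw [← hDeg_union sdiff_disjoint, sdiff_union_of_subset hold]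

end Degree

lemma two_mul_add_le_sq {r K M : ℕ} (hr : 1 ≤ r) (hK : 1 ≤ K)
    (hM : 40 * (r ^ 4 * K ^ 3) ≤ M) : 2 * (M * (7 * r * K + 2 * K ^ 2) + 4 * K ^ 3) ≤ M ^ 2 := by
  have hr4 : 1 ≤ r ^ 4 := Nat.one_le_pow _ _ hr
  have h₁ : r * K ≤ r ^ 4 * K ^ 3 :=
    Nat.mul_le_mul (Nat.le_self_pow (by norm_num) r) (Nat.le_self_pow (by norm_num) K)
  have h₂ : K ^ 2 ≤ r ^ 4 * K ^ 3 :=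
    (Nat.pow_le_pow_right hK (by norm_num)).trans (Nat.le_mul_of_pos_left _ hr4)
  have h₃ : K ^ 3 ≤ r ^ 4 * K ^ 3 := Nat.le_mul_of_pos_left _ hr4
  nlinarith

namespace HypergraphSwitching

variable {n r K : ℕ} {H : Finset (Finset (Fin n))}

def flags (H : Finset (Finset (Fin n))) : Finset (Fin n × Finset (Fin n)) :=
  (univ ×ˢ H).filter fun p => p.1 ∈ p.2

@[simp]
lemma mem_flags {p : Fin n × Finset (Fin n)} : p ∈ flags H ↔ p.2 ∈ H ∧ p.1 ∈ p.2 := by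
  simp [flags]

lemma card_flags_filter_fst_eq (v : Fin n) : #((flags H).filter (·.1 = v)) = hDeg n H v :=
  card_nbij' Prod.snd (v, ·)
    (fun p hp => by
      obtain ⟨⟨hf, hv⟩, rfl⟩ := by simpa using hp
      simpa [hDeg] using ⟨hf, hv⟩)
    (fun f hf => by simpa [hDeg] using hf)
    (fun p hp => by obtain ⟨-, rfl⟩ := (by simpa using hp); rfl) fun _ _ => rfl

lemma card_flags : #(flags H) = ∑ v, hDeg n H v := by
  rw [card_eq_sum_card_fiberwise (f := Prod.fst) (t := univ) fun _ _ => mem_univ _]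
  exact sum_congr rfl fun v _ => card_flags_filter_fst_eq v

lemma card_flags_filter_fst_mem_le (hK : ∀ v, hDeg n H v ≤ K) (s : Finset (Fin n)) :
    #((flags H).filter (·.1 ∈ s)) ≤ #s * K := by
  rw [mul_comm]
  refine card_le_mul_card_image_of_maps_to (fun p hp => (mem_filter.1 hp).2) K fun v _ => ?_
  rw [filter_filter]
  exact (card_le_card (monotone_filter_right _ fun _ _ h => h.2)).trans
    ((card_flags_filter_fst_eq v).trans_le (hK v))

lemma card_flags_filter_mem_snd_le (hU : isUniform n r H) (hK : ∀ v, hDeg n H v ≤ K)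
    (u : Fin n) : #((flags H).filter (u ∈ ·.2)) ≤ r * K := by
  refine (card_le_mul_card_image_of_maps_to (f := Prod.snd) (t := H.filter (u ∈ ·))
    (fun p hp => ?_) r fun f hf => ?_).trans (Nat.mul_le_mul_left r (hK u))
  · simp only [mem_filter, mem_flags] at hp ⊢
    exact ⟨hp.1.1, hp.2⟩
  · rw [← hU f (mem_filter.1 hf).1]
    refine card_le_card_of_injOn Prod.fst (fun p hp => ?_) fun p hp q hq hpq => ?_
    · simp only [coe_filter, mem_filter, mem_flags] at hp
      exact hp.2 ▸ hp.1.1.2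
    · simp only [coe_filter, mem_filter] at hp hq
      exact Prod.ext hpq (hp.2.trans hq.2.symm)

lemma card_flags_product_filter_mem_le (hK : ∀ v, hDeg n H v ≤ K) (s : Finset (Fin n × Fin n)) :
    #((flags H ×ˢ flags H).filter fun p => (p.1.1, p.2.1) ∈ s) ≤ K * K * #s := by
  refine card_le_mul_card_image_of_maps_to (fun p hp => (mem_filter.1 hp).2) (K * K)
    fun a _ => ?_
  calc _ ≤ #((flags H).filter (·.1 = a.1) ×ˢ (flags H).filter (·.1 = a.2)) :=
        card_le_card fun p hp => by
          simp only [mem_filter, mem_product, Prod.ext_iff] at hp ⊢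
          exact ⟨⟨hp.1.1.1, hp.2.1⟩, hp.1.1.2, hp.2.2⟩
    _ ≤ K * K := by
        rw [card_product, card_flags_filter_fst_eq, card_flags_filter_fst_eq]
        exact Nat.mul_le_mul (hK _) (hK _)

def replace (f : Finset (Fin n)) (v u : Fin n) : Finset (Fin n) := insert u (f.erase v)

section Replace

variable {f : Finset (Fin n)} {u v w : Fin n}

lemma mem_replace : w ∈ replace f v u ↔ w = u ∨ w ≠ v ∧ w ∈ f := by
  simp [replace]

lemma mem_replace_self : u ∈ replace f v u := mem_insert_self _ _

lemma card_replace (hv : v ∈ f) (hu : u ∉ f) : #(replace f v u) = #f := by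
  rw [replace, card_insert_of_notMem fun h => hu (mem_of_mem_erase h), card_erase_add_one hv]

lemma replace_erase (hu : u ∉ f) : (replace f v u).erase u = f.erase v :=
  erase_insert fun h => hu (mem_of_mem_erase h)

lemma replace_replace (hv : v ∈ f) (hu : u ∉ f) : replace (replace f v u) u v = f := by
  rw [replace, replace_erase hu, insert_erase hv]

lemma ite_mem_replace (hv : v ∈ f) (hu : u ∉ f) :
    (if w ∈ replace f v u then 1 else 0) + (if w = v then 1 else 0) =
      (if w ∈ f then 1 else 0) + (if w = u then 1 else 0) := by
  have huv : u ≠ v := fun h => hu (h ▸ hv)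
  by_cases hwu : w = u
  · subst hwu
    simp [mem_replace, hu, huv]
  by_cases hwv : w = v
  · subst hwv
    simp [mem_replace, hv, hwu]
  · simp [mem_replace, hwu, hwv]

end Replace

lemma eq_of_replace_eq {u : Fin n} {p q : Fin n × Finset (Fin n)} (hp : p.1 ∈ p.2)
    (hpu : u ∉ p.2) (hq : q.1 ∈ q.2) (hqu : u ∉ q.2) (hv : p.1 = q.1)
    (hg : replace p.2 p.1 u = replace q.2 q.1 u) : p = q :=
  Prod.ext hv (by rw [← replace_replace hp hpu, hg, hv, replace_replace hq hqu])

-- The edge `f - v + u` passes through `u`; it leaves for `f` only the `K` edges through a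
-- vertex `y` of `(f - v + u) - u`, and `f` then determines `v`.
lemma card_flags_filter_replace_mem_le (hU : isUniform n r H) (hr : 2 ≤ r)
    (hK : ∀ v, hDeg n H v ≤ K) (u : Fin n) :
    #((flags H).filter fun p => u ∉ p.2 ∧ replace p.2 p.1 u ∈ H) ≤ K * K := by
  refine (card_le_mul_card_image_of_maps_to (f := fun p => replace p.2 p.1 u)
    (t := H.filter (u ∈ ·)) (fun p hp => ?_) K fun g hg => ?_).trans
      (Nat.mul_le_mul_left K (hK u))
  · exact mem_filter.2 ⟨(mem_filter.1 hp).2.2, mem_replace_self⟩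
  obtain ⟨y, hy⟩ : (g.erase u).Nonempty := by
    rw [← card_pos, card_erase_of_mem (mem_filter.1 hg).2, hU g (mem_filter.1 hg).1]
    omega
  refine le_trans (card_le_card_of_injOn Prod.snd (t := H.filter (y ∈ ·))
    (fun p hp => ?_) fun p hp q hq hpq => ?_) (hK y)
  · simp only [coe_filter, mem_filter, mem_flags] at hp
    obtain ⟨⟨⟨hpH, -⟩, hu, -⟩, rfl⟩ := hp
    rw [replace_erase hu] at hy
    exact mem_filter.2 ⟨hpH, mem_of_mem_erase hy⟩
  · simp only [coe_filter, mem_filter, mem_flags] at hp hq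
    obtain ⟨⟨⟨-, hp₁⟩, hpu, -⟩, hpg⟩ := hp
    obtain ⟨⟨-, hqu, -⟩, hqg⟩ := hq
    have h : p.2.erase p.1 = p.2.erase q.1 := by
      rw [← replace_erase hpu, hpg, ← hqg, replace_erase hqu, hpq]
    exact Prod.ext ((erase_inj _ hp₁).1 h) hpq

open scoped Classical

section Switching

variable (e : Finset (Fin n)) (u₁ u₂ : Fin n)

def pairEdge (v₁ v₂ : Fin n) : Finset (Fin n) := e \ {u₁, u₂} ∪ {v₁, v₂}

def replacementPairs (H : Finset (Finset (Fin n))) : Finset (Fin n × Fin n) :=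
  univ.filter fun v => v.1 ∉ e ∧ v.2 ∉ e ∧ pairEdge e u₁ u₂ v.1 v.2 ∈ H

def IsGoodFlag (H : Finset (Finset (Fin n))) (u : Fin n) (p : Fin n × Finset (Fin n)) : Prop :=
  u ∉ p.2 ∧ p.1 ∉ e ∧ replace p.2 p.1 u ∉ H

-- These conditions make `e, f₁, f₂` distinct, the new edges distinct, of the right size and
-- absent from `H`.
def IsSwitching (H : Finset (Finset (Fin n))) (p₁ p₂ : Fin n × Finset (Fin n)) : Prop :=
  IsGoodFlag e H u₁ p₁ ∧ IsGoodFlag e H u₂ p₂ ∧ u₁ ∉ p₂.2 ∧ p₁.1 ∉ p₂.2 ∧ p₂.1 ∉ p₁.2 ∧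
    (p₁.1, p₂.1) ∉ replacementPairs e u₁ u₂ H

noncomputable def switchings (H : Finset (Finset (Fin n))) :
    Finset ((Fin n × Finset (Fin n)) × (Fin n × Finset (Fin n))) :=
  (flags H ×ˢ flags H).filter fun p => IsSwitching e u₁ u₂ H p.1 p.2

def oldEdges (p₁ p₂ : Fin n × Finset (Fin n)) : Finset (Finset (Fin n)) := {e, p₁.2, p₂.2}

def newEdges (p₁ p₂ : Fin n × Finset (Fin n)) : Finset (Finset (Fin n)) :=
  {pairEdge e u₁ u₂ p₁.1 p₂.1, replace p₁.2 p₁.1 u₁, replace p₂.2 p₂.1 u₂}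

def switch (H : Finset (Finset (Fin n))) (p₁ p₂ : Fin n × Finset (Fin n)) :
    Finset (Finset (Fin n)) :=
  H \ oldEdges e p₁ p₂ ∪ newEdges e u₁ u₂ p₁ p₂

def switchData (p : (Fin n × Finset (Fin n)) × (Fin n × Finset (Fin n))) :
    (Fin n × Fin n) × (Finset (Fin n) × Finset (Fin n)) :=
  ((p.1.1, p.2.1), (replace p.1.2 p.1.1 u₁, replace p.2.2 p.2.1 u₂))

def reverseData (H : Finset (Finset (Fin n))) :
    Finset ((Fin n × Fin n) × (Finset (Fin n) × Finset (Fin n))) :=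
  replacementPairs e u₁ u₂ H ×ˢ (H.filter (u₁ ∈ ·) ×ˢ H.filter (u₂ ∈ ·))

variable {e u₁ u₂} {v₁ v₂ w : Fin n}

lemma mem_pairEdge :
    w ∈ pairEdge e u₁ u₂ v₁ v₂ ↔ (w ∈ e ∧ w ≠ u₁ ∧ w ≠ u₂) ∨ w = v₁ ∨ w = v₂ := by
  simp only [pairEdge, mem_union, mem_sdiff, mem_insert, mem_singleton, not_or]

lemma pairEdge_sdiff (hv₁ : v₁ ∉ e) (hv₂ : v₂ ∉ e) : pairEdge e u₁ u₂ v₁ v₂ \ e = {v₁, v₂} := by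
  ext w
  simp only [mem_sdiff, mem_pairEdge, mem_insert, mem_singleton]
  constructor
  · rintro ⟨⟨h, -⟩ | h, hw⟩
    · exact absurd h hw
    · exact h
  · rintro (rfl | rfl)
    · exact ⟨Or.inr (Or.inl rfl), hv₁⟩
    · exact ⟨Or.inr (Or.inr rfl), hv₂⟩

section

variable (hu₁ : u₁ ∈ e) (hu₂ : u₂ ∈ e) (hu : u₁ ≠ u₂) (hv₁ : v₁ ∉ e) (hv₂ : v₂ ∉ e)
  (hv : v₁ ≠ v₂)
include hu₁ hu₂ hu hv₁ hv₂ hv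

lemma card_pairEdge : #(pairEdge e u₁ u₂ v₁ v₂) = #e := by
  have hsub : {u₁, u₂} ⊆ e := insert_subset hu₁ (singleton_subset_iff.2 hu₂)
  have hdisj : Disjoint (e \ {u₁, u₂}) {v₁, v₂} := by
    simp [disjoint_insert_right, hv₁, hv₂]
  rw [pairEdge, card_union_of_disjoint hdisj, card_sdiff_of_subset hsub, card_pair hu,
    card_pair hv, Nat.sub_add_cancel (card_pair hu ▸ card_le_card hsub)]

lemma ite_mem_pairEdge :
    (if w ∈ pairEdge e u₁ u₂ v₁ v₂ then 1 else 0) + (if w = u₁ then 1 else 0) +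
        (if w = u₂ then 1 else 0) =
      (if w ∈ e then 1 else 0) + (if w = v₁ then 1 else 0) + (if w = v₂ then 1 else 0) := by
  by_cases hw : w ∈ e
  · have h₁ : w ≠ v₁ := ne_of_mem_of_not_mem hw hv₁
    have h₂ : w ≠ v₂ := ne_of_mem_of_not_mem hw hv₂
    by_cases hw₁ : w = u₁
    · subst hw₁
      simp [mem_pairEdge, hw, hu, h₁, h₂]
    by_cases hw₂ : w = u₂
    · subst hw₂
      simp [mem_pairEdge, hw, hw₁, h₁, h₂]
    · simp [mem_pairEdge, hw, hw₁, hw₂, h₁, h₂]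
  · have h₁ : w ≠ u₁ := fun h => hw (h ▸ hu₁)
    have h₂ : w ≠ u₂ := fun h => hw (h ▸ hu₂)
    by_cases hw₁ : w = v₁
    · subst hw₁
      simp [mem_pairEdge, hw, h₁, h₂, hv]
    · simp [mem_pairEdge, hw, hw₁, h₁, h₂]

end

variable {H : Finset (Finset (Fin n))} {p₁ p₂ : Fin n × Finset (Fin n)}

lemma mem_replacementPairs {v : Fin n × Fin n} : v ∈ replacementPairs e u₁ u₂ H ↔
    v.1 ∉ e ∧ v.2 ∉ e ∧ pairEdge e u₁ u₂ v.1 v.2 ∈ H := by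
  simp [replacementPairs]

-- The edge `pairEdge e u₁ u₂ v₁ v₂` passes through `x` and determines `{v₁, v₂}` as its part
-- outside `e`.
lemma card_replacementPairs_le {x : Fin n} (hx : x ∈ e \ {u₁, u₂}) :
    #(replacementPairs e u₁ u₂ H) ≤ 4 * hDeg n H x := by
  refine card_le_mul_card_image_of_maps_to (f := fun v => pairEdge e u₁ u₂ v.1 v.2)
    (t := H.filter (x ∈ ·)) (fun v hv => ?_) 4 fun E _ => ?_
  · exact mem_filter.2 ⟨(mem_replacementPairs.1 hv).2.2, subset_union_left hx⟩
  rcases ((replacementPairs e u₁ u₂ H).filter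
    fun v => pairEdge e u₁ u₂ v.1 v.2 = E).eq_empty_or_nonempty with h | ⟨v, hv⟩
  · simp [h]
  have hsdiff : ∀ v' ∈ (replacementPairs e u₁ u₂ H).filter
      (fun v => pairEdge e u₁ u₂ v.1 v.2 = E), E \ e = {v'.1, v'.2} := by
    intro v' hv'
    obtain ⟨hmem, rfl⟩ := mem_filter.1 hv'
    exact pairEdge_sdiff (mem_replacementPairs.1 hmem).1 (mem_replacementPairs.1 hmem).2.1
  have hsub : (replacementPairs e u₁ u₂ H).filter (fun v => pairEdge e u₁ u₂ v.1 v.2 = E) ⊆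
      ({v.1, v.2} : Finset (Fin n)) ×ˢ {v.1, v.2} := by
    intro v' hv'
    have h' : {v'.1, v'.2} = ({v.1, v.2} : Finset (Fin n)) :=
      (hsdiff v' hv').symm.trans (hsdiff v hv)
    rw [mem_product, ← h']
    simp
  refine (card_le_card hsub).trans ?_
  rw [card_product]
  exact Nat.mul_le_mul card_le_two card_le_two

lemma card_flags_filter_not_isGoodFlag (hU : isUniform n r H) (hr : 2 ≤ r)
    (hK : ∀ v, hDeg n H v ≤ K) (he : #e = r) (u : Fin n) :
    #((flags H).filter fun p => ¬IsGoodFlag e H u p) ≤ 2 * r * K + K * K :=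
  calc #((flags H).filter fun p => ¬IsGoodFlag e H u p)
      ≤ #((flags H).filter fun p => u ∈ p.2 ∨ p.1 ∈ e ∨ (u ∉ p.2 ∧ replace p.2 p.1 u ∈ H)) :=
        card_le_card <| monotone_filter_right _ fun p _ h => by
          simp only [IsGoodFlag, not_and_or, not_not] at h
          tauto
    _ ≤ r * K + (#e * K + K * K) :=
        (card_filter_or_le _ _ _).trans (add_le_add (card_flags_filter_mem_snd_le hU hK u)
          ((card_filter_or_le _ _ _).trans (add_le_add (card_flags_filter_fst_mem_le hK e)
            (card_flags_filter_replace_mem_le hU hr hK u))))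
    _ = 2 * r * K + K * K := by rw [he]; ring

lemma card_not_isSwitching_le (hU : isUniform n r H) (hr : 2 ≤ r) (hK : ∀ v, hDeg n H v ≤ K)
    (he : #e = r) {x : Fin n} (hx : x ∈ e \ {u₁, u₂}) :
    #((flags H ×ˢ flags H).filter fun p => ¬IsSwitching e u₁ u₂ H p.1 p.2) ≤
      #(flags H) * (7 * r * K + 2 * K ^ 2) + 4 * K ^ 3 := by
  set P := flags H
  have hgood := card_flags_filter_not_isGoodFlag hU hr hK he (e := e)
  have h₁ : #((P ×ˢ P).filter fun p => ¬IsGoodFlag e H u₁ p.1) ≤ #P * (2 * r * K + K * K) :=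
    card_filter_product_le_right (P := fun a _ => ¬IsGoodFlag e H u₁ a) fun _ _ => hgood u₁
  have h₂ : #((P ×ˢ P).filter fun p => ¬IsGoodFlag e H u₂ p.2) ≤ #P * (2 * r * K + K * K) :=
    card_filter_product_le_left (P := fun _ b => ¬IsGoodFlag e H u₂ b) fun _ _ => hgood u₂
  have h₃ : #((P ×ˢ P).filter fun p => u₁ ∈ p.2.2) ≤ #P * (r * K) :=
    card_filter_product_le_left (s := P) (t := P) (P := fun _ b => u₁ ∈ b.2) fun _ _ =>
      card_flags_filter_mem_snd_le hU hK u₁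
  have h₄ : #((P ×ˢ P).filter fun p => p.1.1 ∈ p.2.2) ≤ #P * (r * K) :=
    card_filter_product_le_left (s := P) (t := P) (P := fun a b => a.1 ∈ b.2) fun a _ =>
      card_flags_filter_mem_snd_le hU hK a.1
  have h₅ : #((P ×ˢ P).filter fun p => p.2.1 ∈ p.1.2) ≤ #P * (r * K) :=
    card_filter_product_le_left (s := P) (t := P) (P := fun a b => b.1 ∈ a.2) fun a ha => by
      simpa [hU a.2 (mem_flags.1 ha).1] using card_flags_filter_fst_mem_le hK a.2
  have h₆ : #((P ×ˢ P).filter fun p => (p.1.1, p.2.1) ∈ replacementPairs e u₁ u₂ H) ≤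
      4 * K ^ 3 :=
    calc _ ≤ K * K * #(replacementPairs e u₁ u₂ H) := card_flags_product_filter_mem_le hK _
      _ ≤ K * K * (4 * K) := Nat.mul_le_mul_left _
          ((card_replacementPairs_le hx).trans (Nat.mul_le_mul_left 4 (hK x)))
      _ = 4 * K ^ 3 := by ring
  calc _ ≤ #P * (2 * r * K + K * K) + (#P * (2 * r * K + K * K) +
        (#P * (r * K) + (#P * (r * K) + (#P * (r * K) + 4 * K ^ 3)))) := by
        refine (card_le_card <| monotone_filter_right _ fun p _ h => ?_).trans <|
          (card_filter_or_le _ _ _).trans <| add_le_add h₁ <|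
          (card_filter_or_le _ _ _).trans <| add_le_add h₂ <|
          (card_filter_or_le _ _ _).trans <| add_le_add h₃ <|
          (card_filter_or_le _ _ _).trans <| add_le_add h₄ <|
          (card_filter_or_le _ _ _).trans <| add_le_add h₅ h₆
        simp only [IsSwitching, not_and_or, not_not] at h
        exact h
    _ = #P * (7 * r * K + 2 * K ^ 2) + 4 * K ^ 3 := by ring

lemma sq_card_flags_le (hU : isUniform n r H) (hr : 2 ≤ r) (hK : ∀ v, hDeg n H v ≤ K)
    (he : #e = r) {x : Fin n} (hx : x ∈ e \ {u₁, u₂}) :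
    #(flags H) ^ 2 ≤
      #(switchings e u₁ u₂ H) + (#(flags H) * (7 * r * K + 2 * K ^ 2) + 4 * K ^ 3) := by
  rw [sq, ← card_product, switchings, ← card_filter_add_card_filter_not
    (p := fun p => IsSwitching e u₁ u₂ H p.1 p.2)]
  exact add_le_add le_rfl (card_not_isSwitching_le hU hr hK he hx)

lemma oldEdges_subset (he : e ∈ H) (hp₁ : p₁ ∈ flags H) (hp₂ : p₂ ∈ flags H) :
    oldEdges e p₁ p₂ ⊆ H := by
  simp [oldEdges, insert_subset_iff, he, (mem_flags.1 hp₁).1, (mem_flags.1 hp₂).1]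

lemma disjoint_newEdges (hs : IsSwitching e u₁ u₂ H p₁ p₂) :
    Disjoint H (newEdges e u₁ u₂ p₁ p₂) := by
  obtain ⟨⟨-, hv₁, hg₁⟩, ⟨-, hv₂, hg₂⟩, -, -, -, hV⟩ := hs
  rw [mem_replacementPairs] at hV
  simp only [newEdges, disjoint_insert_right, disjoint_singleton_right]
  exact ⟨fun h => hV ⟨hv₁, hv₂, h⟩, hg₁, hg₂⟩

-- `pairEdge` moves the incidences of `u₁, u₂` to `v₁, v₂`; the two replacements move them back.
lemma hDeg_oldEdges_eq (hu₁ : u₁ ∈ e) (hu₂ : u₂ ∈ e) (hu : u₁ ≠ u₂) (hp₁ : p₁ ∈ flags H)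
    (hp₂ : p₂ ∈ flags H) (hs : IsSwitching e u₁ u₂ H p₁ p₂) (w : Fin n) :
    hDeg n (oldEdges e p₁ p₂) w = hDeg n (newEdges e u₁ u₂ p₁ p₂) w := by
  obtain ⟨v₁, f₁⟩ := p₁
  obtain ⟨v₂, f₂⟩ := p₂
  simp only [IsSwitching, IsGoodFlag, mem_flags] at hs hp₁ hp₂
  obtain ⟨⟨hu₁f₁, hv₁, -⟩, ⟨hu₂f₂, hv₂, -⟩, hu₁f₂, hv₁f₂, hv₂f₁, -⟩ := hs
  have hv : v₁ ≠ v₂ := fun h => hv₂f₁ (h ▸ hp₁.2)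
  have hu₁e' : u₁ ∉ pairEdge e u₁ u₂ v₁ v₂ := by
    simp [mem_pairEdge, ne_of_mem_of_not_mem hu₁ hv₁, ne_of_mem_of_not_mem hu₁ hv₂]
  have hu₂e' : u₂ ∉ pairEdge e u₁ u₂ v₁ v₂ := by
    simp [mem_pairEdge, ne_of_mem_of_not_mem hu₂ hv₁, ne_of_mem_of_not_mem hu₂ hv₂]
  have hu₁g₂ : u₁ ∉ replace f₂ v₂ u₂ := by simp [mem_replace, hu, hu₁f₂]
  rw [oldEdges, newEdges, hDeg_triple (ne_of_mem_of_not_mem' hp₁.2 hv₁).symm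
      (ne_of_mem_of_not_mem' hp₂.2 hv₂).symm (ne_of_mem_of_not_mem' hp₁.2 hv₁f₂),
    hDeg_triple (ne_of_mem_of_not_mem' mem_replace_self hu₁e').symm
      (ne_of_mem_of_not_mem' mem_replace_self hu₂e').symm
      (ne_of_mem_of_not_mem' mem_replace_self hu₁g₂)]
  dsimp only
  have := ite_mem_pairEdge hu₁ hu₂ hu hv₁ hv₂ hv (w := w)
  have := ite_mem_replace hp₁.2 hu₁f₁ (w := w)
  have := ite_mem_replace hp₂.2 hu₂f₂ (w := w)
  omega

lemma switch_sdiff_union (he : e ∈ H) (hp₁ : p₁ ∈ flags H) (hp₂ : p₂ ∈ flags H)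
    (hs : IsSwitching e u₁ u₂ H p₁ p₂) :
    switch e u₁ u₂ H p₁ p₂ \ newEdges e u₁ u₂ p₁ p₂ ∪ oldEdges e p₁ p₂ = H := by
  rw [switch, union_sdiff_right, sdiff_eq_self_of_disjoint
    (disjoint_of_subset_left sdiff_subset (disjoint_newEdges hs)),
    sdiff_union_of_subset (oldEdges_subset he hp₁ hp₂)]

lemma switch_mem_HrSet {k : Fin n → ℕ} (hH : H ∈ HrSet n r k) (he : e ∈ H) (hu₁ : u₁ ∈ e)
    (hu₂ : u₂ ∈ e) (hu : u₁ ≠ u₂) (hp₁ : p₁ ∈ flags H) (hp₂ : p₂ ∈ flags H)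
    (hs : IsSwitching e u₁ u₂ H p₁ p₂) : switch e u₁ u₂ H p₁ p₂ ∈ HrSet n r k := by
  obtain ⟨hU, hdeg⟩ := hH
  refine ⟨fun g hg => ?_, fun w => ?_⟩
  · rcases mem_union.1 hg with hg | hg
    · exact hU g (mem_sdiff.1 hg).1
    obtain ⟨v₁, f₁⟩ := p₁
    obtain ⟨v₂, f₂⟩ := p₂
    simp only [IsSwitching, IsGoodFlag, mem_flags] at hs hp₁ hp₂
    obtain ⟨⟨hu₁f₁, hv₁, -⟩, ⟨hu₂f₂, hv₂, -⟩, -, -, hv₂f₁, -⟩ := hs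
    simp only [newEdges, mem_insert, mem_singleton] at hg
    rcases hg with rfl | rfl | rfl
    · rw [card_pairEdge hu₁ hu₂ hu hv₁ hv₂ fun h => hv₂f₁ (h ▸ hp₁.2), hU e he]
    · rw [card_replace hp₁.2 hu₁f₁, hU f₁ hp₁.1]
    · rw [card_replace hp₂.2 hu₂f₂, hU f₂ hp₂.1]
  · rw [switch, hDeg_sdiff_union (oldEdges_subset he hp₁ hp₂)
      (disjoint_of_subset_left sdiff_subset (disjoint_newEdges hs))
      (hDeg_oldEdges_eq hu₁ hu₂ hu hp₁ hp₂ hs), hdeg]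

lemma notMem_switch (he : e ∈ H) (hs : IsSwitching e u₁ u₂ H p₁ p₂) :
    e ∉ switch e u₁ u₂ H p₁ p₂ := by
  rw [switch, mem_union, not_or]
  exact ⟨fun h => (mem_sdiff.1 h).2 (mem_insert_self _ _),
    (disjoint_left.1 (disjoint_newEdges hs)) he⟩

lemma switchData_mem_reverseData {p : (Fin n × Finset (Fin n)) × (Fin n × Finset (Fin n))}
    (hs : IsSwitching e u₁ u₂ H p.1 p.2) :
    switchData u₁ u₂ p ∈ reverseData e u₁ u₂ (switch e u₁ u₂ H p.1 p.2) := by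
  obtain ⟨⟨-, hv₁, -⟩, ⟨-, hv₂, -⟩, -⟩ := hs
  have hnew : newEdges e u₁ u₂ p.1 p.2 ⊆ switch e u₁ u₂ H p.1 p.2 := subset_union_right
  simp only [newEdges, insert_subset_iff, singleton_subset_iff] at hnew
  simp only [switchData, reverseData, mem_product, mem_replacementPairs, mem_filter]
  exact ⟨⟨hv₁, hv₂, hnew.1⟩, ⟨hnew.2.1, mem_replace_self⟩, hnew.2.2, mem_replace_self⟩

lemma card_reverseData_le (hK : ∀ v, hDeg n H v ≤ K) {x : Fin n} (hx : x ∈ e \ {u₁, u₂}) :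
    #(reverseData e u₁ u₂ H) ≤ 4 * K ^ 3 := by
  rw [reverseData, card_product, card_product]
  calc _ ≤ 4 * K * (K * K) :=
        Nat.mul_le_mul ((card_replacementPairs_le hx).trans (Nat.mul_le_mul_left 4 (hK x)))
          (Nat.mul_le_mul (hK u₁) (hK u₂))
    _ = 4 * K ^ 3 := by ring

end Switching

section DoubleCounting

variable {k : Fin n → ℕ} {e : Finset (Fin n)}

variable (n r k e) in
noncomputable def withEdge : Finset (Finset (Finset (Fin n))) :=
  univ.filter fun H => H ∈ HrSet n r k ∧ e ∈ H

variable (n r k e) in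
noncomputable def withoutEdge : Finset (Finset (Finset (Fin n))) :=
  univ.filter fun H => H ∈ HrSet n r k ∧ e ∉ H

lemma sum_card_switchings_le {u₁ u₂ : Fin n} (hu₁ : u₁ ∈ e) (hu₂ : u₂ ∈ e) (hu : u₁ ≠ u₂) :
    ∑ H ∈ withEdge n r k e, #(switchings e u₁ u₂ H) ≤
      ∑ H ∈ withoutEdge n r k e, #(reverseData e u₁ u₂ H) := by
  rw [← card_sigma, ← card_sigma]
  refine card_le_card_of_injOn (fun x => ⟨switch e u₁ u₂ x.1 x.2.1 x.2.2, switchData u₁ u₂ x.2⟩)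
    (fun x hx => ?_) fun x hx y hy hxy => ?_
  · simp only [withEdge, withoutEdge, coe_sigma, Set.mem_sigma_iff, coe_filter, mem_univ,
      true_and, switchings, mem_product] at hx ⊢
    obtain ⟨⟨hH, he⟩, ⟨hp₁, hp₂⟩, hs⟩ := hx
    exact ⟨⟨switch_mem_HrSet hH he hu₁ hu₂ hu hp₁ hp₂ hs, notMem_switch he hs⟩,
      switchData_mem_reverseData hs⟩
  · obtain ⟨H, p₁, p₂⟩ := x
    obtain ⟨H', q₁, q₂⟩ := y
    simp only [withEdge, coe_sigma, Set.mem_sigma_iff, coe_filter, mem_univ, true_and,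
      switchings, mem_product] at hx hy
    obtain ⟨⟨-, he⟩, ⟨hp₁, hp₂⟩, hs⟩ := hx
    obtain ⟨⟨-, he'⟩, ⟨hq₁, hq₂⟩, hs'⟩ := hy
    simp only [switchData, Sigma.mk.injEq, heq_eq_eq, Prod.mk.injEq] at hxy
    obtain ⟨hsw, ⟨hv₁, hv₂⟩, hg₁, hg₂⟩ := hxy
    obtain rfl : p₁ = q₁ := eq_of_replace_eq (mem_flags.1 hp₁).2 hs.1.1 (mem_flags.1 hq₁).2
      hs'.1.1 hv₁ hg₁
    obtain rfl : p₂ = q₂ := eq_of_replace_eq (mem_flags.1 hp₂).2 hs.2.1.1 (mem_flags.1 hq₂).2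
      hs'.2.1.1 hv₂ hg₂
    rw [← switch_sdiff_union he hp₁ hp₂ hs, ← switch_sdiff_union he' hq₁ hq₂ hs', hsw]

lemma card_withEdge_mul_sq_le (hr : 3 ≤ r) (he : #e = r) (hK : ∀ v, k v ≤ K) :
    #(withEdge n r k e) * Mk n k ^ 2 ≤
      #(withEdge n r k e) * (Mk n k * (7 * r * K + 2 * K ^ 2) + 4 * K ^ 3) +
        #(withoutEdge n r k e) * (4 * K ^ 3) := by
  obtain ⟨u₁, hu₁, u₂, hu₂, x, hx, hu, hux₁, hux₂⟩ := two_lt_card.1 (he ▸ hr : 2 < #e)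
  have hx' : x ∈ e \ {u₁, u₂} := by simp [hx, hux₁.symm, hux₂.symm]
  set bad := Mk n k * (7 * r * K + 2 * K ^ 2) + 4 * K ^ 3
  calc #(withEdge n r k e) * Mk n k ^ 2 = ∑ H ∈ withEdge n r k e, Mk n k ^ 2 := by
        rw [sum_const, smul_eq_mul]
    _ ≤ ∑ H ∈ withEdge n r k e, (#(switchings e u₁ u₂ H) + bad) := by
        refine sum_le_sum fun H hH => ?_
        obtain ⟨⟨hU, hdeg⟩, -⟩ := (mem_filter.1 hH).2
        have hM : #(flags H) = Mk n k := by
          rw [card_flags, Mk]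
          exact sum_congr rfl fun v _ => hdeg v
        simpa only [hM] using sq_card_flags_le hU (by omega) (fun v => hdeg v ▸ hK v) he hx'
    _ = ∑ H ∈ withEdge n r k e, #(switchings e u₁ u₂ H) + #(withEdge n r k e) * bad := by
        rw [sum_add_distrib, sum_const, smul_eq_mul]
    _ ≤ ∑ H ∈ withoutEdge n r k e, #(reverseData e u₁ u₂ H) + #(withEdge n r k e) * bad :=
        add_le_add (sum_card_switchings_le hu₁ hu₂ hu) le_rfl
    _ ≤ #(withoutEdge n r k e) * (4 * K ^ 3) + #(withEdge n r k e) * bad := by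
        refine add_le_add ((sum_le_card_nsmul _ _ _ fun H hH => ?_).trans_eq
          (smul_eq_mul _ _)) le_rfl
        obtain ⟨⟨-, hdeg⟩, -⟩ := (mem_filter.1 hH).2
        exact card_reverseData_le (fun v => hdeg v ▸ hK v) hx'
    _ = _ := add_comm _ _

lemma one_le_kmax {H : Finset (Finset (Fin n))} (hH : H ∈ HrSet n r k) (he : e ∈ H)
    (hne : e.Nonempty) : 1 ≤ kmax n k := by
  obtain ⟨x, hx⟩ := hne
  calc 1 ≤ hDeg n H x := card_pos.2 ⟨e, mem_filter.2 ⟨he, hx⟩⟩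
    _ = k x := hH.2 x
    _ ≤ kmax n k := le_sup (mem_univ x)

lemma card_withEdge_le (hr : 3 ≤ r) (he : #e = r)
    (hM : 40 * (r ^ 4 * kmax n k ^ 3) ≤ Mk n k) :
    (#(withEdge n r k e) : ℝ) ≤
      8 * #(withoutEdge n r k e) * ((kmax n k : ℝ) ^ 3 / (Mk n k : ℝ) ^ 2) := by
  rcases (withEdge n r k e).eq_empty_or_nonempty with h | ⟨H, hH⟩
  · rw [h, card_empty, Nat.cast_zero]
    positivity
  obtain ⟨hH, heH⟩ := (mem_filter.1 hH).2
  have hK := one_le_kmax hH heH (card_pos.1 (by omega))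
  have hcount := card_withEdge_mul_sq_le (K := kmax n k) hr he fun v => le_sup (mem_univ v)
  have hbad := Nat.mul_le_mul_left #(withEdge n r k e) (two_mul_add_le_sq (by omega) hK hM)
  have hMpos : (0 : ℝ) < Mk n k := by
    have : 0 < r ^ 4 * kmax n k ^ 3 := by positivity
    exact_mod_cast (by omega : 0 < Mk n k)
  have key : #(withEdge n r k e) * Mk n k ^ 2 ≤ 8 * #(withoutEdge n r k e) * kmax n k ^ 3 := by
    nlinarith
  rw [mul_div_assoc', le_div_iff₀ (by positivity)]
  exact_mod_cast key

end DoubleCounting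

end HypergraphSwitching

open HypergraphSwitching in
theorem stmt10 :
    ∃ C : ℝ, 0 < C ∧ ∃ δ : ℝ, 0 < δ ∧
      ∀ (n r : ℕ) (k : Fin n → ℕ) (ei : Finset (Fin n)),
        3 ≤ n → 3 ≤ r → ei.card = r →
        (r : ℝ) ^ 4 * (kmax n k : ℝ) ^ 3 ≤ δ * (Mk n k : ℝ) →
        (({H ∈ HrSet n r k | ei ∈ H}).ncard : ℝ) ≤
          C * (({H ∈ HrSet n r k | ei ∉ H}).ncard : ℝ) *
            ((kmax n k : ℝ) ^ 3 / (Mk n k : ℝ) ^ 2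
              + (r : ℝ) * (kmax n k : ℝ) ^ 4 / (Mk n k : ℝ) ^ 3) := by
  refine ⟨8, by norm_num, 1 / 40, by norm_num, fun n r k ei _ hr hei hδ => ?_⟩
  have hA : {H ∈ HrSet n r k | ei ∈ H}.ncard = #(withEdge n r k ei) := by
    rw [← Set.ncard_coe_finset, withEdge, coe_filter]
    simp
  have hB : {H ∈ HrSet n r k | ei ∉ H}.ncard = #(withoutEdge n r k ei) := by
    rw [← Set.ncard_coe_finset, withoutEdge, coe_filter]
    simp
  have hM : 40 * (r ^ 4 * kmax n k ^ 3) ≤ Mk n k := by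
    have : (40 : ℝ) * (r ^ 4 * kmax n k ^ 3) ≤ Mk n k := by linarith
    exact_mod_cast this
  rw [hA, hB]
  calc _ ≤ 8 * #(withoutEdge n r k ei) * ((kmax n k : ℝ) ^ 3 / (Mk n k : ℝ) ^ 2) :=
        card_withEdge_le hr hei hM
    _ ≤ _ := by
        gcongr
        exact le_add_of_nonneg_right (by positivity)
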